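/- Let ℓ be a nonnegative integer. Define 𝔊(x,y,z) = Q_{4ℓ+1}(x,y)·sin z + Q_{4ℓ+1}(x,z)·sin y + Q_{4ℓ+1}(z,x)·cos y − Q_{4ℓ+1}(y,x)·cos z, and let V be the vector field on ℝ³ given by V(x,y,z) = (𝔊(x,y,z), 𝔊(y,z,x), 𝔊(z,x,y)). Then V satisfies the Beltrami equation ∇×V = V. -/

import Mathlib

noncomputable section

open Real

/-- The standard harmonic polynomial `P_n(x,y) = Re((x+iy)^n)`. -/
def polyP (n : ℕ) (x y : ℝ) : ℝ := ((x + y * Complex.I) ^ n).re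

/-- The standard harmonic polynomial `Q_n(x,y) = Im((x+iy)^n)`. -/
def polyQ (n : ℕ) (x y : ℝ) : ℝ := ((x + y * Complex.I) ^ n).im

/-- Partial derivative in the `i`-th coordinate direction. -/
def pd (i : Fin 3) (F : (Fin 3 → ℝ) → ℝ) : (Fin 3 → ℝ) → ℝ :=
  fun v => deriv (fun t => F (Function.update v i t)) (v i)

/-- Divergence of a vector field on ℝ³. -/
def div3 (V : (Fin 3 → ℝ) → (Fin 3 → ℝ)) : (Fin 3 → ℝ) → ℝ :=
  fun v => pd 0 (fun w => V w 0) v + pd 1 (fun w => V w 1) v + pd 2 (fun w => V w 2) v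

/-- Curl of a vector field on ℝ³. -/
def curl3 (V : (Fin 3 → ℝ) → (Fin 3 → ℝ)) : (Fin 3 → ℝ) → (Fin 3 → ℝ) :=
  fun v => ![pd 1 (fun w => V w 2) v - pd 2 (fun w => V w 1) v,
             pd 2 (fun w => V w 0) v - pd 0 (fun w => V w 2) v,
             pd 0 (fun w => V w 1) v - pd 1 (fun w => V w 0) v]

/-- Laplacian of a scalar function on ℝ³. -/
def lap3 (F : (Fin 3 → ℝ) → ℝ) : (Fin 3 → ℝ) → ℝ :=
  fun v => pd 0 (pd 0 F) v + pd 1 (pd 1 F) v + pd 2 (pd 2 F) v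

/-!
For a field of the cyclic form `V(x,y,z) = (G(x,y,z), G(y,z,x), G(z,x,y))`, every component of
`∇×V = V` is the same scalar identity `∂₃G(c,a,b) - ∂₂G(b,c,a) = G(a,b,c)`. Differentiating with
`∂ₓQₙ₊₁ = (n+1) Qₙ` and `∂_yQₙ₊₁ = (n+1) Pₙ` (Cauchy–Riemann for `(x+iy)^(n+1)`), this identity reduces to
`P₄ₗ(c,b) = P₄ₗ(b,c)` and `Q₄ₗ(c,b) = -Q₄ₗ(b,c)`, which hold because `b + ia = i·conj(a + ib)` and
`i⁴ = 1`.
-/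

lemma HasDerivAt.complex_im {f : ℝ → ℂ} {f' : ℂ} {x : ℝ} (h : HasDerivAt f f' x) :
    HasDerivAt (fun t => (f t).im) f'.im x := by
  simpa [Function.comp_def] using Complex.imCLM.hasFDerivAt.comp_hasDerivAt x h

lemma hasDerivAt_polyQ_fst (n : ℕ) (x y : ℝ) :
    HasDerivAt (fun t => polyQ (n + 1) t y) ((n + 1) * polyQ n x y) x := by
  have h : HasDerivAt (fun w : ℂ => (w + y * Complex.I) ^ (n + 1))
      ((n + 1) * ((x : ℂ) + y * Complex.I) ^ n) x := by
    simpa using ((hasDerivAt_id (x : ℂ)).add_const (y * Complex.I)).fun_pow (n + 1)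
  simpa [polyQ] using h.comp_ofReal.complex_im

lemma hasDerivAt_polyQ_snd (n : ℕ) (x y : ℝ) :
    HasDerivAt (fun t => polyQ (n + 1) x t) ((n + 1) * polyP n x y) y := by
  have h : HasDerivAt (fun w : ℂ => (x + w * Complex.I) ^ (n + 1))
      ((n + 1) * ((x : ℂ) + y * Complex.I) ^ n * Complex.I) y := by
    simpa using (((hasDerivAt_id (y : ℂ)).mul_const Complex.I).const_add (x : ℂ)).fun_pow (n + 1)
  simpa [polyQ, polyP, Complex.mul_im] using h.comp_ofReal.complex_im

lemma swap_pow_four_mul_eq_conj (l : ℕ) (a b : ℝ) :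
    ((b : ℂ) + a * Complex.I) ^ (4 * l) = starRingEnd ℂ (((a : ℂ) + b * Complex.I) ^ (4 * l)) := by
  have h : (b : ℂ) + a * Complex.I = Complex.I * starRingEnd ℂ ((a : ℂ) + b * Complex.I) := by
    simp only [map_add, map_mul, Complex.conj_ofReal, Complex.conj_I]
    linear_combination (b : ℂ) * Complex.I_sq
  rw [h, mul_pow, ← map_pow, pow_mul, Complex.I_pow_four, one_pow, one_mul]

lemma polyP_four_mul_swap (l : ℕ) (a b : ℝ) : polyP (4 * l) b a = polyP (4 * l) a b := by
  rw [polyP, swap_pow_four_mul_eq_conj, Complex.conj_re, polyP]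

lemma polyQ_four_mul_swap (l : ℕ) (a b : ℝ) : polyQ (4 * l) b a = -polyQ (4 * l) a b := by
  rw [polyQ, swap_pow_four_mul_eq_conj, Complex.conj_im, polyQ]

/-- The function `𝔊` of the statement, for an arbitrary order `n`. -/
def tetrahedralProfile (n : ℕ) (x y z : ℝ) : ℝ :=
  polyQ n x y * sin z + polyQ n x z * sin y + polyQ n z x * cos y - polyQ n y x * cos z

lemma deriv_tetrahedralProfile_snd (m : ℕ) (x y z : ℝ) :
    deriv (fun t => tetrahedralProfile (m + 1) x t z) y =
      (m + 1) * polyP m x y * sin z + polyQ (m + 1) x z * cos y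
        - polyQ (m + 1) z x * sin y - (m + 1) * polyQ m y x * cos z := by
  have h := (((hasDerivAt_polyQ_snd m x y).mul_const (sin z)).add
      ((hasDerivAt_sin y).const_mul (polyQ (m + 1) x z))).add
      ((hasDerivAt_cos y).const_mul (polyQ (m + 1) z x)) |>.sub
      ((hasDerivAt_polyQ_fst m y x).mul_const (cos z))
  exact (h.congr_deriv (by ring)).deriv

lemma deriv_tetrahedralProfile_thd (m : ℕ) (x y z : ℝ) :
    deriv (fun t => tetrahedralProfile (m + 1) x y t) z =
      polyQ (m + 1) x y * cos z + (m + 1) * polyP m x z * sin y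
        + (m + 1) * polyQ m z x * cos y + polyQ (m + 1) y x * sin z := by
  have h := (((hasDerivAt_sin z).const_mul (polyQ (m + 1) x y)).add
      ((hasDerivAt_polyQ_snd m x z).mul_const (sin y))).add
      ((hasDerivAt_polyQ_fst m z x).mul_const (cos y)) |>.sub
      ((hasDerivAt_cos z).const_mul (polyQ (m + 1) y x))
  exact (h.congr_deriv (by ring)).deriv

lemma tetrahedralProfile_cyclic_deriv (l : ℕ) (a b c : ℝ) :
    deriv (fun t => tetrahedralProfile (4 * l + 1) c a t) b
      - deriv (fun t => tetrahedralProfile (4 * l + 1) b t a) c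
      = tetrahedralProfile (4 * l + 1) a b c := by
  rw [deriv_tetrahedralProfile_snd, deriv_tetrahedralProfile_thd, tetrahedralProfile,
    polyP_four_mul_swap l b c, polyQ_four_mul_swap l c b]
  ring

def cyclicField (G : ℝ → ℝ → ℝ → ℝ) (v : Fin 3 → ℝ) : Fin 3 → ℝ :=
  ![G (v 0) (v 1) (v 2), G (v 1) (v 2) (v 0), G (v 2) (v 0) (v 1)]

lemma curl3_cyclicField (G : ℝ → ℝ → ℝ → ℝ) :
    curl3 (cyclicField G) =
      cyclicField fun a b c => deriv (fun t => G c a t) b - deriv (fun t => G b t a) c := by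
  funext v i
  fin_cases i <;> simp [curl3, pd, cyclicField]

theorem beltrami_tetrahedral_first (l : ℕ) :
    let G : ℝ → ℝ → ℝ → ℝ := fun x y z =>
      polyQ (4 * l + 1) x y * Real.sin z + polyQ (4 * l + 1) x z * Real.sin y
        + polyQ (4 * l + 1) z x * Real.cos y - polyQ (4 * l + 1) y x * Real.cos z
    let V : (Fin 3 → ℝ) → (Fin 3 → ℝ) := fun v =>
      ![G (v 0) (v 1) (v 2), G (v 1) (v 2) (v 0), G (v 2) (v 0) (v 1)]
    ∀ v, curl3 V v = V v := by
  intro G V v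
  change curl3 (cyclicField (tetrahedralProfile (4 * l + 1))) v
    = cyclicField (tetrahedralProfile (4 * l + 1)) v
  simp only [curl3_cyclicField, tetrahedralProfile_cyclic_deriv]
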